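/- Let L1, L2 : F_{2^n} → F_{2^n} be F_2-linear maps. Then x ↦ L1(x^{-1}) + L2(x) (with 0^{-1}=0) is a permutation of F_{2^n} if and only if ker(L1*) ∩ ker(L2*) = {0} and K_n(L1*(b) · L2*(b)) = 0 for all b ∈ F_{2^n}, where K_n is the Kloosterman sum and L* the adjoint with respect to the trace form. -/

import Mathlib

noncomputable section

abbrev K (n : ℕ) := GaloisField 2 n

noncomputable instance (n : ℕ) : Fintype (K n) := Fintype.ofFinite _

/-- The absolute trace of `F_{2^n}` to `F_2`. -/
def tr (n : ℕ) : K n →ₗ[ZMod 2] ZMod 2 := Algebra.trace (ZMod 2) (K n)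

/-- The additive character `x ↦ (-1)^{Tr(x)}`. -/
def chi (n : ℕ) (x : K n) : ℤ := (-1) ^ (tr n x).val

/-- The Kloosterman sum. -/
def Kl (n : ℕ) (a : K n) : ℤ := ∑ x : K n, chi n (x⁻¹ + a * x)

/-- The Walsh transform of `F`. -/
def W (n : ℕ) (F : K n → K n) (a b : K n) : ℤ := ∑ x : K n, chi n (a * F x + b * x)

/-- The quadratic form `Q(x) = ∑_{0 ≤ i < j < n} x^{2^i + 2^j}`. -/
def Qf (n : ℕ) (x : K n) : K n := ∑ i ∈ Finset.range n, ∑ j ∈ Finset.Ioo i n, x ^ (2^i + 2^j)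

/-
A map `F` on `𝔽_{2^n}` is a permutation iff every component sum `∑ₓ (-1)^Tr(F(x) b)`, `b ≠ 0`,
vanishes (count the fibres of `F` with the orthogonality relations of the character
`(-1)^Tr`). For `F(x) = L₁(x⁻¹) + L₂(x)` the adjoints turn this sum into
`∑ₓ (-1)^Tr(x⁻¹ L₁*(b) + x L₂*(b))`. If `L₁*(b) ≠ 0`, the substitution `x ↦ L₁*(b) x`
identifies it with `K_n(L₁*(b) L₂*(b))`; if `L₁*(b) = 0`, it is the character sum of `L₂*(b) x`,
which is `0 = K_n(0)` unless also `L₂*(b) = 0`, where it is `2^n`.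
-/

open Finset

variable {n : ℕ}

lemma chi_congr {x y : K n} (h : tr n x = tr n y) : chi n x = chi n y := by
  rw [chi, chi, h]

lemma chi_zero : chi n 0 = 1 := by
  rw [chi, map_zero]; rfl

lemma chi_add (x y : K n) : chi n (x + y) = chi n x * chi n y := by
  rw [chi, chi, chi, map_add]
  generalize tr n x = a
  generalize tr n y = b
  revert a b
  decide

def chiAddChar (n : ℕ) : AddChar (K n) ℤ where
  toFun := chi n
  map_zero_eq_one' := chi_zero
  map_add_eq_mul' := chi_add

lemma chiAddChar_isPrimitive : (chiAddChar n).IsPrimitive := by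
  refine AddChar.IsPrimitive.of_ne_one fun h => ?_
  obtain ⟨x, hx⟩ := Algebra.trace_surjective (ZMod 2) (K n) 1
  have hx1 : chi n x = 1 := DFunLike.congr_fun h x
  rw [chi, tr, hx] at hx1
  exact absurd hx1 (by decide)

lemma sum_chi_mul [DecidableEq (K n)] (c : K n) :
    ∑ x, chi n (x * c) = if c = 0 then (Fintype.card (K n) : ℤ) else 0 :=
  mod_cast AddChar.sum_mulShift c chiAddChar_isPrimitive

lemma sum_chi_mul_of_ne_zero {c : K n} (hc : c ≠ 0) : ∑ x, chi n (x * c) = 0 := by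
  classical
  rw [sum_chi_mul, if_neg hc]

lemma card_mul_card_fiber [DecidableEq (K n)] (F : K n → K n) (c : K n) :
    (Fintype.card (K n) : ℤ) * #{x | F x = c} = ∑ b, chi n (-(c * b)) * ∑ x, chi n (F x * b) := by
  calc (Fintype.card (K n) : ℤ) * #{x | F x = c}
      = ∑ x, ∑ b, chi n (b * (F x - c)) := by
        simp_rw [sum_chi_mul, sub_eq_zero, sum_ite, sum_const_zero, add_zero, sum_const,
          nsmul_eq_mul, mul_comm]
    _ = ∑ b, chi n (-(c * b)) * ∑ x, chi n (F x * b) := by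
        rw [sum_comm]
        simp_rw [mul_sum, ← chi_add]
        refine sum_congr rfl fun b _ => sum_congr rfl fun x _ => ?_
        ring_nf

lemma bijective_iff_sum_chi_mul_eq_zero (F : K n → K n) :
    Function.Bijective F ↔ ∀ b ≠ 0, ∑ x, chi n (F x * b) = 0 := by
  classical
  refine ⟨fun hF b hb => ?_, fun h => Finite.surjective_iff_bijective.mp fun c => ?_⟩
  · exact ((Equiv.ofBijective F hF).sum_comp (fun y => chi n (y * b))).trans
      (sum_chi_mul_of_ne_zero hb)
  · have hcard := card_mul_card_fiber F c
    rw [sum_eq_single 0 (fun b _ hb => by rw [h b hb, mul_zero]) (by simp)] at hcard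
    simp only [mul_zero, neg_zero, chi_zero, one_mul, sum_const, card_univ, nsmul_one] at hcard
    have hfiber : #{x | F x = c} = 1 := by
      exact_mod_cast (mul_eq_left₀ (by exact_mod_cast Fintype.card_ne_zero)).mp hcard
    obtain ⟨a, ha⟩ := card_pos.mp hfiber.ge
    exact ⟨a, (mem_filter.mp ha).2⟩

lemma Kl_zero : Kl n 0 = 0 := by
  simp_rw [Kl, zero_mul, add_zero]
  refine (Equiv.sum_comp (Equiv.inv (K n)) (chi n)).trans ?_
  simpa using sum_chi_mul_of_ne_zero (one_ne_zero (α := K n))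

lemma sum_chi_inv_mul_add_mul {a c : K n} (h : a ≠ 0 ∨ c ≠ 0) :
    ∑ x, chi n (x⁻¹ * a + x * c) = Kl n (a * c) := by
  rcases eq_or_ne a 0 with rfl | ha
  · simp_rw [mul_zero, zero_add, zero_mul, Kl_zero]
    exact sum_chi_mul_of_ne_zero (h.resolve_left (not_not.mpr rfl))
  · rw [Kl, ← Equiv.sum_comp (Equiv.mulLeft₀ a ha)]
    refine sum_congr rfl fun y _ => congrArg (chi n) ?_
    rw [Equiv.mulLeft₀_apply, mul_inv, mul_comm a⁻¹, mul_assoc, inv_mul_cancel₀ ha, mul_one]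
    ring

lemma sum_chi_inv_mul_add_mul_eq_zero_iff (a c : K n) :
    ∑ x, chi n (x⁻¹ * a + x * c) = 0 ↔ (a ≠ 0 ∨ c ≠ 0) ∧ Kl n (a * c) = 0 := by
  by_cases h : a ≠ 0 ∨ c ≠ 0
  · simp only [sum_chi_inv_mul_add_mul h, h, true_and]
  · obtain ⟨rfl, rfl⟩ : a = 0 ∧ c = 0 := by tauto
    simp [chi_zero]

theorem stmt5 {n : ℕ} (L1 L2 L1s L2s : K n →ₗ[ZMod 2] K n)
    (h1 : ∀ x y, tr n (L1 x * y) = tr n (x * L1s y))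
    (h2 : ∀ x y, tr n (L2 x * y) = tr n (x * L2s y)) :
    Function.Bijective (fun x : K n => L1 x⁻¹ + L2 x) ↔
      (LinearMap.ker L1s ⊓ LinearMap.ker L2s = ⊥ ∧
        ∀ b : K n, Kl n (L1s b * L2s b) = 0) := by
  have hsum (b : K n) :
      ∑ x, chi n ((L1 x⁻¹ + L2 x) * b) = ∑ x, chi n (x⁻¹ * L1s b + x * L2s b) :=
    sum_congr rfl fun x _ => chi_congr (by rw [add_mul, map_add, map_add, h1, h2])
  simp_rw [bijective_iff_sum_chi_mul_eq_zero, hsum, sum_chi_inv_mul_add_mul_eq_zero_iff,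
    imp_and, forall_and]
  refine and_congr ?_ (forall_congr' fun b => ⟨fun h => ?_, fun h _ => h⟩)
  · simp only [Submodule.eq_bot_iff, Submodule.mem_inf, LinearMap.mem_ker]
    exact forall_congr' fun b => by tauto
  · rcases eq_or_ne b 0 with rfl | hb
    · simp [Kl_zero]
    · exact h hb
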